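/- Fix η ∈ (0,1), n̄_B > 0, δ > 0 and let c_cov = √(2·η·n̄_B·(1+η·n̄_B))/(1−η). Define the entanglement-assisted capacity C_EA(n̄_S) = g(n̄_S) + g(η·n̄_S + (1−η)·n̄_B) − g(A₊) − g(A₋), where g(x) = (1+x)·log₂(1+x) − x·log₂ x (g(0)=0), A_± = (B − 1 ± (1−η)(n̄_B − n̄_S))/2, and B = √((n̄_S + 1 + η·n̄_S + (1−η)·n̄_B)² − 4·η·n̄_S·(n̄_S+1)). Then lim_{n→∞} n·C_EA(√δ·c_cov/√n) / (√n·log₂ n) = √δ·c_cov·η/(2·(1 + (1−η)·n̄_B)). -/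

import Mathlib

/-!
Near `0` the entropy `g x = (1 + x) log (1 + x) - x log x` is smooth up to the term `-x log x`.
Of the four arguments of `g` in `C_EA(s)` only `s` and `A₋(s)` tend to `0`, and
`A₋(s) ~ κ s` with `κ = 1 - η / (1 + (1 - η) n̄_B)`, so
`C_EA(s) = -s log s + A₋(s) log A₋(s) + O(s) ~ (1 - κ) (-s log s)`.
At `s = c / √n` one has `-s log s ~ c log n / (2 √n)`, which gives the limit.
-/

open Filter Topology Real

lemma tendsto_div_nhdsGT_zero_of_hasDerivAt {f : ℝ → ℝ} {d : ℝ} (hf : HasDerivAt f d 0)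
    (hf0 : f 0 = 0) :
    Tendsto (fun s => f s / s) (𝓝[>] 0) (𝓝 d) := by
  simpa [hf0, div_eq_inv_mul] using hf.tendsto_slope_zero_right

lemma tendsto_neg_log_nhdsGT_zero : Tendsto (fun s => -log s) (𝓝[>] 0) atTop :=
  tendsto_neg_atBot_atTop.comp tendsto_log_nhdsGT_zero

lemma negMulLog_pos {x : ℝ} (h0 : 0 < x) (h1 : x < 1) : 0 < negMulLog x := by
  rw [negMulLog_eq_neg, neg_pos]
  exact mul_log_neg h0 h1

lemma eventually_nhdsGT_zero_mem_Ioo_one : ∀ᶠ s in 𝓝[>] (0 : ℝ), s ∈ Set.Ioo 0 1 :=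
  Ioo_mem_nhdsGT one_pos

lemma tendsto_div_negMulLog_of_differentiableAt {f : ℝ → ℝ} (hf : DifferentiableAt ℝ f 0)
    (hf0 : f 0 = 0) : Tendsto (fun s => f s / negMulLog s) (𝓝[>] 0) (𝓝 0) := by
  have h := (tendsto_div_nhdsGT_zero_of_hasDerivAt hf.hasDerivAt hf0).mul
    tendsto_neg_log_nhdsGT_zero.inv_tendsto_atTop
  rw [mul_zero] at h
  refine h.congr fun s => ?_
  rw [Pi.inv_apply, negMulLog, neg_mul, ← mul_neg, ← div_div, ← div_eq_mul_inv]

lemma tendsto_negMulLog_comp_div_negMulLog {a : ℝ → ℝ} {κ : ℝ} (ha : HasDerivAt a κ 0)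
    (ha0 : a 0 = 0) (hκ : 0 < κ) :
    Tendsto (fun s => negMulLog (a s) / negMulLog s) (𝓝[>] 0) (𝓝 κ) := by
  have hslope := tendsto_div_nhdsGT_zero_of_hasDerivAt ha ha0
  -- `log (a s) / log s = 1 - log (a s / s) / -log s`
  have hlog : Tendsto (fun s => 1 - log (a s / s) / -log s) (𝓝[>] 0) (𝓝 1) := by
    simpa using tendsto_const_nhds.sub
      (((continuousAt_log hκ.ne').tendsto.comp hslope).div_atTop tendsto_neg_log_nhdsGT_zero)
  have h := hslope.mul hlog
  rw [mul_one] at h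
  refine h.congr' ?_
  filter_upwards [hslope.eventually (eventually_gt_nhds hκ), eventually_nhdsGT_zero_mem_Ioo_one]
    with s hratio ⟨hs0, hs1⟩
  have has : 0 < a s := by simpa [hs0.ne'] using mul_pos hratio hs0
  have hlogs : log s ≠ 0 := (log_neg hs0 hs1).ne
  rw [log_div has.ne' hs0.ne']
  simp only [negMulLog]
  field_simp
  ring

lemma tendsto_div_negMulLog_of_eq_sub_add {C a N : ℝ → ℝ} {κ : ℝ}
    (hC : ∀ s, C s = negMulLog s - negMulLog (a s) + N s)
    (ha : HasDerivAt a κ 0) (ha0 : a 0 = 0) (hκ : 0 < κ)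
    (hN : DifferentiableAt ℝ N 0) (hN0 : N 0 = 0) :
    Tendsto (fun s => C s / negMulLog s) (𝓝[>] 0) (𝓝 (1 - κ)) := by
  have h := ((tendsto_const_nhds (x := (1 : ℝ))).sub
    (tendsto_negMulLog_comp_div_negMulLog ha ha0 hκ)).add
    (tendsto_div_negMulLog_of_differentiableAt hN hN0)
  rw [add_zero] at h
  refine h.congr' ?_
  filter_upwards [eventually_nhdsGT_zero_mem_Ioo_one] with s ⟨hs0, hs1⟩
  rw [hC, add_div, sub_div, div_self (negMulLog_pos hs0 hs1).ne']

lemma tendsto_mul_comp_div_sqrt {F : ℝ → ℝ} {L c : ℝ}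
    (hF : Tendsto (fun s => F s / negMulLog s) (𝓝[>] 0) (𝓝 L)) (hc : 0 < c) :
    Tendsto (fun x => x * F (c / √x) / (√x * log x)) atTop (𝓝 (L * c / 2)) := by
  have hs : Tendsto (fun x => c / √x) atTop (𝓝[>] 0) := by
    refine tendsto_nhdsWithin_iff.2 ⟨tendsto_sqrt_atTop.const_div_atTop c, ?_⟩
    filter_upwards [eventually_gt_atTop 0] with x hx
    exact div_pos hc (sqrt_pos.2 hx)
  -- `√x * negMulLog (c / √x) / log x = c / 2 - c * log c / log x`
  have hscale : Tendsto (fun x => c / 2 - c * log c * (log x)⁻¹) atTop (𝓝 (c / 2)) := by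
    simpa using tendsto_const_nhds.sub
      (tendsto_log_atTop.inv_tendsto_atTop.const_mul (c * log c))
  have h := (hF.comp hs).mul hscale
  rw [mul_div_assoc]
  refine h.congr' ?_
  filter_upwards [eventually_gt_atTop 1, (hs.eventually eventually_nhdsGT_zero_mem_Ioo_one)]
    with x hx ⟨hs0, hs1⟩
  have hx0 : 0 < x := by linarith
  have hlogx : log x ≠ 0 := (log_pos hx).ne'
  have hsqrt : 0 < √x := sqrt_pos.2 hx0
  have hlog_s : log (c / √x) = log c - log x / 2 := by
    rw [log_div hc.ne' hsqrt.ne', log_sqrt hx0.le]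
  have hlog_ne : log c * 2 - log x ≠ 0 := by
    have := hlog_s ▸ (log_neg hs0 hs1).ne
    contrapose! this; linarith
  simp only [Function.comp, negMulLog, hlog_s]
  field_simp
  rw [sq_sqrt hx0.le]
  ring

noncomputable def thermalEntropy (x : ℝ) : ℝ := negMulLog x - negMulLog (1 + x)

lemma mul_logb_sub_mul_logb_eq_thermalEntropy_div (x : ℝ) :
    (1 + x) * logb 2 (1 + x) - x * logb 2 x = thermalEntropy x / log 2 := by
  simp only [thermalEntropy, negMulLog, logb]
  ring

lemma differentiableAt_thermalEntropy {x : ℝ} (hx : 0 < x) :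
    DifferentiableAt ℝ thermalEntropy x :=
  (differentiableAt_negMulLog_iff.2 hx.ne').sub
    ((differentiableAt_negMulLog_iff.2 (by linarith)).comp x
      ((differentiableAt_const 1).add differentiableAt_id))

namespace LossyThermalChannel

variable (η nB : ℝ)

noncomputable def sqrtDiscr (s : ℝ) : ℝ :=
  √((s + 1 + η * s + (1 - η) * nB) ^ 2 - 4 * η * s * (s + 1))

noncomputable def aPlus (s : ℝ) : ℝ := (sqrtDiscr η nB s - 1 + (1 - η) * (nB - s)) / 2

noncomputable def aMinus (s : ℝ) : ℝ := (sqrtDiscr η nB s - 1 - (1 - η) * (nB - s)) / 2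

noncomputable def eaCapacity (s : ℝ) : ℝ :=
  thermalEntropy s + thermalEntropy (η * s + (1 - η) * nB)
    - thermalEntropy (aPlus η nB s) - thermalEntropy (aMinus η nB s)

variable {η nB}

lemma sqrtDiscr_zero (hb : 0 ≤ 1 + (1 - η) * nB) : sqrtDiscr η nB 0 = 1 + (1 - η) * nB := by
  simp [sqrtDiscr, sqrt_sq hb]

lemma hasDerivAt_sqrtDiscr (hb : 0 < 1 + (1 - η) * nB) :
    HasDerivAt (sqrtDiscr η nB) (1 + η - 2 * η / (1 + (1 - η) * nB)) 0 := by
  have hlin : HasDerivAt (fun s : ℝ => s + 1 + η * s + (1 - η) * nB) (1 + η) 0 := by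
    simpa using ((((hasDerivAt_id 0).add_const 1).add ((hasDerivAt_id 0).const_mul η)).add_const
      ((1 - η) * nB))
  have hquad : HasDerivAt (fun s : ℝ => 4 * η * s * (s + 1)) (4 * η) 0 := by
    simpa [Pi.mul_def] using ((hasDerivAt_id 0).const_mul (4 * η)).mul
      ((hasDerivAt_id 0).add_const 1)
  have hQ0 : (0 + 1 + η * 0 + (1 - η) * nB) ^ 2 - 4 * η * 0 * (0 + 1) =
      (1 + (1 - η) * nB) ^ 2 := by
    ring
  have h := ((hlin.pow 2).sub hquad).sqrt
    (by simp only [Pi.sub_apply, Pi.pow_apply, hQ0]; positivity)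
  unfold sqrtDiscr
  refine h.congr_deriv ?_
  simp only [Pi.sub_apply, Pi.pow_apply, hQ0, sqrt_sq hb.le]
  field_simp
  ring

lemma aMinus_zero (hb : 0 ≤ 1 + (1 - η) * nB) : aMinus η nB 0 = 0 := by
  simp [aMinus, sqrtDiscr_zero hb]

lemma aPlus_zero (hb : 0 ≤ 1 + (1 - η) * nB) : aPlus η nB 0 = (1 - η) * nB := by
  simp [aPlus, sqrtDiscr_zero hb]

lemma hasDerivAt_aMinus (hb : 0 < 1 + (1 - η) * nB) :
    HasDerivAt (aMinus η nB) (1 - η / (1 + (1 - η) * nB)) 0 := by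
  have h := (((hasDerivAt_sqrtDiscr hb).sub_const 1).sub
    (((hasDerivAt_id 0).const_sub nB).const_mul (1 - η))).div_const 2
  refine h.congr_deriv ?_
  field_simp
  ring

lemma differentiableAt_aPlus (hb : 0 < 1 + (1 - η) * nB) : DifferentiableAt ℝ (aPlus η nB) 0 :=
  ((((hasDerivAt_sqrtDiscr hb).sub_const 1).add
    (((hasDerivAt_id 0).const_sub nB).const_mul (1 - η))).div_const 2).differentiableAt

lemma tendsto_eaCapacity_div_negMulLog (hη : η < 1) (hnB : 0 < nB) :
    Tendsto (fun s => eaCapacity η nB s / negMulLog s) (𝓝[>] 0)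
      (𝓝 (η / (1 + (1 - η) * nB))) := by
  have hp : 0 < (1 - η) * nB := mul_pos (by linarith) hnB
  have hb : 0 < 1 + (1 - η) * nB := by linarith
  have hκ : 0 < 1 - η / (1 + (1 - η) * nB) := by
    rw [sub_pos, div_lt_one hb]; linarith
  have hmean : DifferentiableAt ℝ (fun s => thermalEntropy (η * s + (1 - η) * nB)) 0 := by
    refine DifferentiableAt.comp (g := thermalEntropy) (f := fun s => η * s + (1 - η) * nB) 0 ?_
      (by fun_prop)
    simpa using differentiableAt_thermalEntropy hp
  have hplus : DifferentiableAt ℝ (fun s => thermalEntropy (aPlus η nB s)) 0 := by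
    refine DifferentiableAt.comp (g := thermalEntropy) 0 ?_ (differentiableAt_aPlus hb)
    simpa [aPlus_zero hb.le] using differentiableAt_thermalEntropy hp
  have hminus : DifferentiableAt ℝ (fun s => negMulLog (1 + aMinus η nB s)) 0 := by
    refine DifferentiableAt.comp (g := negMulLog) (f := fun s => 1 + aMinus η nB s) 0 ?_
      ((hasDerivAt_aMinus hb).differentiableAt.const_add 1)
    simp [aMinus_zero hb.le, differentiableAt_negMulLog_iff]
  have hone : DifferentiableAt ℝ (fun s => negMulLog (1 + s)) 0 := by
    refine DifferentiableAt.comp (g := negMulLog) (f := fun s => 1 + s) 0 ?_ (by fun_prop)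
    simp [differentiableAt_negMulLog_iff]
  have h := tendsto_div_negMulLog_of_eq_sub_add (C := eaCapacity η nB)
    (N := fun s => thermalEntropy (η * s + (1 - η) * nB) - thermalEntropy (aPlus η nB s)
      + negMulLog (1 + aMinus η nB s) - negMulLog (1 + s))
    (fun s => by simp only [eaCapacity, thermalEntropy]; ring)
    (hasDerivAt_aMinus hb) (aMinus_zero hb.le) hκ (((hmean.sub hplus).add hminus).sub hone)
    (by simp [aPlus_zero hb.le, aMinus_zero hb.le])
  rwa [sub_sub_cancel] at h

end LossyThermalChannel

theorem stmt_5 (η nB δ : ℝ) (hη : η ∈ Set.Ioo (0:ℝ) 1) (hnB : 0 < nB) (hδ : 0 < δ)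
    (ccov : ℝ) (hccov : ccov = Real.sqrt (2 * η * nB * (1 + η * nB)) / (1 - η))
    (g : ℝ → ℝ) (hg : ∀ x, g x = (1 + x) * Real.logb 2 (1 + x) - x * Real.logb 2 x)
    (B Ap Am CEA : ℝ → ℝ)
    (hB : ∀ nS, B nS = Real.sqrt ((nS + 1 + η * nS + (1 - η) * nB) ^ 2 - 4 * η * nS * (nS + 1)))
    (hAp : ∀ nS, Ap nS = (B nS - 1 + (1 - η) * (nB - nS)) / 2)
    (hAm : ∀ nS, Am nS = (B nS - 1 - (1 - η) * (nB - nS)) / 2)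
    (hCEA : ∀ nS, CEA nS = g nS + g (η * nS + (1 - η) * nB) - g (Ap nS) - g (Am nS)) :
    Filter.Tendsto
      (fun n : ℕ => (n : ℝ) * CEA (Real.sqrt δ * ccov / Real.sqrt n) /
        (Real.sqrt n * Real.logb 2 n))
      Filter.atTop
      (nhds (Real.sqrt δ * ccov * η / (2 * (1 + (1 - η) * nB)))) := by
  have hCEA_eq : CEA = fun s => LossyThermalChannel.eaCapacity η nB s / log 2 := by
    funext s
    simp only [hCEA, hg, hAp, hAm, hB, mul_logb_sub_mul_logb_eq_thermalEntropy_div,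
      LossyThermalChannel.eaCapacity, LossyThermalChannel.aPlus, LossyThermalChannel.aMinus,
      LossyThermalChannel.sqrtDiscr]
    ring
  have hccov_pos : 0 < ccov := by
    rw [hccov]
    exact div_pos (sqrt_pos.2 (by have := hη.1; positivity)) (by linarith [hη.2])
  have h := (tendsto_mul_comp_div_sqrt
    (LossyThermalChannel.tendsto_eaCapacity_div_negMulLog hη.2 hnB)
    (mul_pos (sqrt_pos.2 hδ) hccov_pos)).comp tendsto_natCast_atTop_atTop
  convert h using 2 with n
  · simp only [Function.comp, hCEA_eq, logb]
    rw [mul_div_assoc', mul_div_assoc', div_div_div_cancel_right₀ (log_pos one_lt_two).ne']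
  · field_simp
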